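/- If $K_y$ is a bounded, measurable, positive definite, characteristic kernel on $\mathbb{R}^d$, and for two joint distributions $f(y,t) = f(y\mid t)h(t)$ and $g(y,t) = g(y\mid t)h(t)$ over $\mathbb{R}^d \times \mathcal{T}$ (with $\mathcal{T}$ finite and $h(t) > 0$ for all $t$) the factorized-kernel MMD satisfies $\mathrm{MMD}_K^2(f,g) = 0$, then $f(\cdot\mid t) = g(\cdot\mid t)$ for every $t \in \mathcal{T}$, and hence $f = g$ as joint distributions. -/

import Mathlib

open MeasureTheory NNReal

/-- Squared maximum mean discrepancy between two measures with respect to a kernel `K`. -/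
noncomputable def MMD2 {α : Type*} [MeasurableSpace α] (K : α → α → ℝ) (μ ν : Measure α) : ℝ :=
  (∫ p, K p.1 p.2 ∂(μ.prod μ)) - 2 * (∫ p, K p.1 p.2 ∂(μ.prod ν))
    + (∫ p, K p.1 p.2 ∂(ν.prod ν))

/-- A symmetric positive definite kernel. -/
def IsPosDefKernel {α : Type*} (K : α → α → ℝ) : Prop :=
  (∀ x y, K x y = K y x) ∧
    ∀ (n : ℕ) (x : Fin n → α) (c : Fin n → ℝ),
      0 ≤ ∑ j, ∑ k, c j * c k * K (x j) (x k)

/-!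
The factorized kernel only couples points with equal times, so expanding both mixtures
bilinearly gives `MMD²_K(f, g) = ∑ₜ h(t)² MMD²_{K_y}(f(·|t), g(·|t))`. Every summand is
nonnegative because `K_y` is positive definite: integrating the Gram inequality for `n`
independent samples from each of two laws, with weights `±1`, gives `n² MMD² ≥ -4nB`.
Since `h(t) > 0`, each conditional MMD² vanishes, and `K_y` is characteristic.
-/

open Finset

namespace MeasureTheory.Measure

lemma map_pi_eval_pair_eq_prod {ι α : Type*} [Fintype ι] [MeasurableSpace α]
    (μ : ι → Measure α) [∀ i, IsProbabilityMeasure (μ i)] {i j : ι} (hij : i ≠ j) :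
    (Measure.pi μ).map (fun ω => (ω i, ω j)) = (μ i).prod (μ j) := by
  have hind := (ProbabilityTheory.iIndepFun_pi (X := fun _ x => x) (μ := μ)
    fun _ => measurable_id.aemeasurable).indepFun hij
  rw [(ProbabilityTheory.indepFun_iff_map_prod_eq_prod_map_map (measurable_pi_apply i).aemeasurable
    (measurable_pi_apply j).aemeasurable).1 hind,
    (measurePreserving_eval μ i).map_eq, (measurePreserving_eval μ j).map_eq]

lemma sum_smul_prod_sum_smul {α β ι ι' : Type*} [MeasurableSpace α] [MeasurableSpace β]
    [Fintype ι] [Fintype ι'] (c : ι → ℝ≥0) (c' : ι' → ℝ≥0) (m : ι → Measure α)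
    (m' : ι' → Measure β) [∀ j, SFinite (m' j)] :
    (∑ i, c i • m i).prod (∑ j, c' j • m' j)
      = ∑ p : ι × ι', (c p.1 * c' p.2) • (m p.1).prod (m' p.2) := by
  simp_rw [← sum_fintype, prod_sum, prod_smul_left, prod_smul_right, smul_smul]

end MeasureTheory.Measure

lemma Measurable.integrable_of_abs_le {α : Type*} [MeasurableSpace α] {f : α → ℝ}
    (hf : Measurable f) {C : ℝ} (hC : ∀ x, |f x| ≤ C) (μ : Measure α) [IsFiniteMeasure μ] :
    Integrable f μ :=
  .of_bound hf.aestronglyMeasurable C (ae_of_all _ hC)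

lemma integral_pi_eval_pair {ι α : Type*} [Fintype ι] [MeasurableSpace α]
    (μ : ι → Measure α) [∀ i, IsProbabilityMeasure (μ i)] {i j : ι} (hij : i ≠ j)
    {F : α → α → ℝ} (hF : Measurable (Function.uncurry F)) :
    ∫ ω, F (ω i) (ω j) ∂Measure.pi μ = ∫ p, F p.1 p.2 ∂(μ i).prod (μ j) := by
  rw [← Measure.map_pi_eval_pair_eq_prod μ hij, integral_map
    ((measurable_pi_apply i).prodMk (measurable_pi_apply j)).aemeasurable
    hF.aestronglyMeasurable]

lemma integral_prod_swap_of_symm {α : Type*} [MeasurableSpace α] {K : α → α → ℝ}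
    (hK : ∀ x y, K x y = K y x) (μ ν : Measure α) [SFinite μ] [SFinite ν] :
    ∫ p, K p.1 p.2 ∂ν.prod μ = ∫ p, K p.1 p.2 ∂μ.prod ν := by
  rw [← integral_prod_swap]
  simp only [Prod.fst_swap, Prod.snd_swap, hK]

namespace IsPosDefKernel

variable {α : Type*} {K : α → α → ℝ}

lemma sum_sum_nonneg (hK : IsPosDefKernel K) {ι : Type*} [Fintype ι] (x : ι → α)
    (c : ι → ℝ) : 0 ≤ ∑ i, ∑ j, c i * c j * K (x i) (x j) := by
  let e := (Fintype.equivFin ι).symm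
  have h := hK.2 _ (x ∘ e) (c ∘ e)
  simp only [Function.comp_apply] at h
  rwa [Fintype.sum_equiv e _ (fun i => ∑ j, c i * c j * K (x i) (x j))
    fun k => Fintype.sum_equiv e _ _ fun l => rfl] at h

variable [MeasurableSpace α]

lemma neg_le_sum_sum_integral_prod (hK : IsPosDefKernel K)
    (hm : Measurable (Function.uncurry K)) {B : ℝ} (hB : ∀ x y, |K x y| ≤ B)
    {ι : Type*} [Fintype ι] (μ : ι → Measure α) [∀ i, IsProbabilityMeasure (μ i)]
    (c : ι → ℝ) :
    -(2 * B * ∑ i, c i ^ 2) ≤ ∑ i, ∑ j, c i * c j * ∫ p, K p.1 p.2 ∂(μ i).prod (μ j) := by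
  let P := Measure.pi μ
  let I i j := ∫ ω, K (ω i) (ω j) ∂P
  let J i j := ∫ p, K p.1 p.2 ∂(μ i).prod (μ j)
  have hint : ∀ i j, Integrable (fun ω => K (ω i) (ω j)) P := fun i j =>
    (hm.comp (by fun_prop : Measurable fun ω : ι → α => (ω i, ω j))).integrable_of_abs_le
      (fun _ => hB _ _) P
  have hexp : 0 ≤ ∑ i, ∑ j, c i * c j * I i j := by
    calc 0 ≤ ∫ ω, ∑ i, ∑ j, c i * c j * K (ω i) (ω j) ∂P :=
          integral_nonneg fun ω => hK.sum_sum_nonneg ω c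
      _ = _ := by
        simp only [I]
        rw [integral_finsetSum _ fun i _ => integrable_finsetSum _ fun j _ => (hint i j).const_mul _]
        refine sum_congr rfl fun i _ => ?_
        rw [integral_finsetSum _ fun j _ => (hint i j).const_mul _]
        simp only [integral_const_mul]
  have hdiag : ∀ i, I i i - J i i ≤ 2 * B := fun i => by
    have hI : |I i i| ≤ B := by
      simpa using norm_integral_le_of_norm_le_const (μ := P)
        (f := fun ω => K (ω i) (ω i)) (ae_of_all _ fun ω => hB _ _)
    have hT : |J i i| ≤ B := by
      simpa using norm_integral_le_of_norm_le_const (μ := (μ i).prod (μ i))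
        (f := fun p => K p.1 p.2) (ae_of_all _ fun p => hB _ _)
    linarith [abs_le.1 hI, abs_le.1 hT]
  have hsplit : ∑ i, ∑ j, c i * c j * I i j - ∑ i, ∑ j, c i * c j * J i j
      = ∑ i, c i ^ 2 * (I i i - J i i) := by
    rw [← sum_sub_distrib]
    refine sum_congr rfl fun i _ => ?_
    rw [← sum_sub_distrib, sum_eq_single i (fun j _ hji => ?_) (by simp)]
    · ring
    · rw [show I i j = J i j from integral_pi_eval_pair μ hji.symm hm, sub_self]
  have hcorr : ∑ i, c i ^ 2 * (I i i - J i i) ≤ 2 * B * ∑ i, c i ^ 2 := by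
    rw [mul_sum]
    exact sum_le_sum fun i _ => by nlinarith [hdiag i, sq_nonneg (c i)]
  linarith

lemma mmd2_nonneg (hK : IsPosDefKernel K) (hm : Measurable (Function.uncurry K)) {B : ℝ}
    (hB : ∀ x y, |K x y| ≤ B) (μ ν : Measure α) [IsProbabilityMeasure μ]
    [IsProbabilityMeasure ν] : 0 ≤ MMD2 K μ ν := by
  have hbound : ∀ n : ℕ, 0 < n → -(4 * B) / n ≤ MMD2 K μ ν := by
    intro n hn
    let μs := Sum.elim (fun _ : Fin n => μ) fun _ : Fin n => ν
    have : ∀ i, IsProbabilityMeasure (μs i) := by rintro (_ | _) <;> assumption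
    have h := hK.neg_le_sum_sum_integral_prod hm hB μs (Sum.elim 1 (-1))
    simp only [μs, Fintype.sum_sum_type, Sum.elim_inl, Sum.elim_inr, Pi.one_apply, Pi.neg_apply,
      one_pow, even_two, Even.neg_pow, sum_const, card_univ, Fintype.card_fin, nsmul_eq_mul,
      mul_one, one_mul, mul_neg, neg_mul, neg_neg, smul_add, smul_neg,
      integral_prod_swap_of_symm hK.1 μ ν] at h
    have hn' : (0 : ℝ) < n := by exact_mod_cast hn
    have : 0 ≤ n * (MMD2 K μ ν * n + 4 * B) := by rw [MMD2]; linarith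
    rw [div_le_iff₀ hn']
    linarith [(mul_nonneg_iff_of_pos_left hn').1 this]
  exact le_of_tendsto (tendsto_const_div_atTop_nhds_zero_nat _)
    (Filter.eventually_atTop.2 ⟨1, hbound⟩)

end IsPosDefKernel

section FactorKernel

variable {α T : Type*} [DecidableEq T] {K : α → α → ℝ}

def factorKernel (K : α → α → ℝ) (p q : α × T) : ℝ :=
  K p.1 q.1 * if p.2 = q.2 then 1 else 0

lemma abs_factorKernel_le {B : ℝ} (hB : ∀ x y, |K x y| ≤ B) (p q : α × T) :
    |factorKernel K p q| ≤ B := by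
  unfold factorKernel
  split_ifs
  · simpa using hB p.1 q.1
  · simpa using (abs_nonneg _).trans (hB p.1 p.1)

variable [MeasurableSpace α] [MeasurableSpace T] [MeasurableEq T]

lemma measurable_factorKernel (hm : Measurable (Function.uncurry K)) :
    Measurable fun p : (α × T) × (α × T) => factorKernel K p.1 p.2 :=
  (hm.comp (measurable_fst.fst.prodMk measurable_snd.fst)).mul
    (Measurable.ite (measurableSet_eq_fun measurable_fst.snd measurable_snd.snd)
      measurable_const measurable_const)

lemma integral_factorKernel_map_prod_map (hm : Measurable (Function.uncurry K))
    (μ ν : Measure α) [SFinite μ] [SFinite ν] (s t : T) :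
    ∫ p, factorKernel K p.1 p.2 ∂(μ.map (fun y => (y, s))).prod (ν.map (fun y => (y, t)))
      = if s = t then ∫ p, K p.1 p.2 ∂μ.prod ν else 0 := by
  have hemb : ∀ t : T, Measurable fun y : α => (y, t) := fun t => by fun_prop
  rw [Measure.map_prod_map _ _ (hemb s) (hemb t), integral_map
    ((hemb s).prodMap (hemb t)).aemeasurable (measurable_factorKernel hm).aestronglyMeasurable]
  split_ifs with hst <;> simp [factorKernel, hst]

end FactorKernel

noncomputable def jointMeasure {α T : Type*} [MeasurableSpace α] [Fintype T] [MeasurableSpace T]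
    (h : T → ℝ≥0) (μ : T → Measure α) : Measure (α × T) :=
  ∑ t, h t • (μ t).map (fun y => (y, t))

section Joint

variable {α T : Type*} [MeasurableSpace α] [Fintype T] [DecidableEq T] [MeasurableSpace T]
  [MeasurableEq T] {K : α → α → ℝ}

lemma integral_factorKernel_jointMeasure_prod
    (hm : Measurable (Function.uncurry K)) {B : ℝ} (hB : ∀ x y, |K x y| ≤ B) (h : T → ℝ≥0)
    (μ ν : T → Measure α) [∀ t, IsFiniteMeasure (μ t)] [∀ t, IsFiniteMeasure (ν t)] :
    ∫ p, factorKernel K p.1 p.2 ∂(jointMeasure h μ).prod (jointMeasure h ν)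
      = ∑ t, (h t : ℝ) ^ 2 * ∫ p, K p.1 p.2 ∂(μ t).prod (ν t) := by
  rw [jointMeasure, jointMeasure, Measure.sum_smul_prod_sum_smul,
    integral_finsetSum_measure fun p _ => ((measurable_factorKernel hm).integrable_of_abs_le
      (fun p => abs_factorKernel_le hB p.1 p.2) _).smul_measure_nnreal,
    Fintype.sum_prod_type]
  simp_rw [integral_smul_nnreal_measure, integral_factorKernel_map_prod_map hm, smul_ite,
    smul_zero, sum_ite_eq, mem_univ, if_true, NNReal.smul_def, smul_eq_mul, NNReal.coe_mul, sq]

lemma mmd2_factorKernel_jointMeasure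
    (hm : Measurable (Function.uncurry K)) {B : ℝ} (hB : ∀ x y, |K x y| ≤ B) (h : T → ℝ≥0)
    (μ ν : T → Measure α) [∀ t, IsFiniteMeasure (μ t)] [∀ t, IsFiniteMeasure (ν t)] :
    MMD2 (factorKernel K) (jointMeasure h μ) (jointMeasure h ν)
      = ∑ t, (h t : ℝ) ^ 2 * MMD2 K (μ t) (ν t) := by
  simp only [MMD2, integral_factorKernel_jointMeasure_prod hm hB, mul_sum, ← sum_sub_distrib,
    ← sum_add_distrib]
  exact sum_congr rfl fun t _ => by ring

end Joint

theorem characteristic_kernel_mmd_zero_implies_equal_general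
    {d : ℕ} {T : Type*} [Fintype T] [DecidableEq T] [MeasurableSpace T]
    [MeasurableSingletonClass T]
    (Ky : (Fin d → ℝ) → (Fin d → ℝ) → ℝ)
    (hKpd : IsPosDefKernel Ky)
    (hKmeas : Measurable (Function.uncurry Ky))
    (B : ℝ) (hB : ∀ x y, |Ky x y| ≤ B)
    (hchar : ∀ μ ν : Measure (Fin d → ℝ), IsProbabilityMeasure μ →
      IsProbabilityMeasure ν → MMD2 Ky μ ν = 0 → μ = ν)
    (h : T → ℝ≥0) (hpos : ∀ t, 0 < h t)
    (f g : T → Measure (Fin d → ℝ))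
    [∀ t, IsProbabilityMeasure (f t)] [∀ t, IsProbabilityMeasure (g t)]
    (hzero : MMD2 (fun p q : (Fin d → ℝ) × T => Ky p.1 q.1 * (if p.2 = q.2 then (1 : ℝ) else 0))
      (∑ t, h t • (f t).map (fun y => (y, t)))
      (∑ t, h t • (g t).map (fun y => (y, t))) = 0) :
    (∀ t, f t = g t) ∧
      (∑ t, h t • (f t).map (fun y => (y, t)))
        = (∑ t, h t • (g t).map (fun y => (y, t))) := by
  have hsum : ∑ t, (h t : ℝ) ^ 2 * MMD2 Ky (f t) (g t) = 0 :=
    (mmd2_factorKernel_jointMeasure hKmeas hB h f g).symm.trans hzero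
  have hterm : ∀ t, (h t : ℝ) ^ 2 * MMD2 Ky (f t) (g t) = 0 := fun t =>
    (sum_eq_zero_iff_of_nonneg (fun t _ => mul_nonneg (sq_nonneg _)
      (hKpd.mmd2_nonneg hKmeas hB (f t) (g t)))).1 hsum t (mem_univ t)
  have hfg : ∀ t, f t = g t := fun t =>
    hchar _ _ inferInstance inferInstance <| (mul_eq_zero.1 (hterm t)).resolve_left <|
      pow_ne_zero _ (NNReal.coe_ne_zero.2 (hpos t).ne')
  exact ⟨hfg, by simp_rw [hfg]⟩

/-- If the state kernel is bounded, measurable, positive definite and characteristic, and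
the factorized-kernel MMD between two joint state–time distributions (with common, fully
supported time marginal) vanishes, then the conditionals agree at every time, and hence
the joints agree. -/
theorem characteristic_kernel_mmd_zero_implies_equal
    {d : ℕ} {T : Type*} [Fintype T] [DecidableEq T] [MeasurableSpace T]
    [MeasurableSingletonClass T]
    (Ky : (Fin d → ℝ) → (Fin d → ℝ) → ℝ)
    (hKpd : IsPosDefKernel Ky)
    (hKmeas : Measurable (Function.uncurry Ky))
    (B : ℝ) (hB : ∀ x y, |Ky x y| ≤ B)
    (hchar : ∀ μ ν : Measure (Fin d → ℝ), IsProbabilityMeasure μ →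
      IsProbabilityMeasure ν → MMD2 Ky μ ν = 0 → μ = ν)
    (h : T → ℝ≥0) (hpos : ∀ t, 0 < h t) (hsum : ∑ t, h t = 1)
    (f g : T → Measure (Fin d → ℝ))
    [∀ t, IsProbabilityMeasure (f t)] [∀ t, IsProbabilityMeasure (g t)]
    (hzero : MMD2 (fun p q : (Fin d → ℝ) × T => Ky p.1 q.1 * (if p.2 = q.2 then (1 : ℝ) else 0))
      (∑ t, h t • (f t).map (fun y => (y, t)))
      (∑ t, h t • (g t).map (fun y => (y, t))) = 0) :
    (∀ t, f t = g t) ∧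
      (∑ t, h t • (f t).map (fun y => (y, t)))
        = (∑ t, h t • (g t).map (fun y => (y, t))) :=
  characteristic_kernel_mmd_zero_implies_equal_general Ky hKpd hKmeas B hB hchar h hpos f g hzero
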